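/- Let K be a field, X = {x₁,…,xₙ}, I_ρ a right ideal of K⟨X⟩ with right generating set F, and I_ρ^{φ̄} the right ideal of ℬ = K⟨X,T,T⁻¹⟩/J generated by {φ̄(f) : f ∈ F}. Then the two inclusions mon(I_ρ) ⊆ { f ∈ K⟨X⟩ : π(ι(f)) ∈ I_ρ^{φ̄} } ⊆ I_ρ hold. -/

import Mathlib

open scoped BigOperators

/-- The right ideal generated by a set `S`, i.e. the set of finite sums `∑ fᵢ * qᵢ`
with `fᵢ ∈ S` and `qᵢ` arbitrary ring elements. -/
def rightIdealSpan {A : Type*} [Semiring A] (S : Set A) : Set A :=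
  {x | ∃ (d : ℕ) (f q : Fin d → A), (∀ i, f i ∈ S) ∧ x = ∑ i, f i * q i}

/-- The alphabet `X ∪ T ∪ T⁻¹` with `n` letters `xᵢ`, `n` letters `tᵢ` and `n` letters
`tᵢ⁻¹` (one pair `tᵢ, tᵢ⁻¹` for each `xᵢ`). -/
abbrev XTTn (n : ℕ) := Fin n ⊕ (Fin n ⊕ Fin n)

/-- The relations generating the ideal `J ⊆ K⟨X,T,T⁻¹⟩`: the commutators
`xᵢt_j − t_jxᵢ` (`1 ≤ i,j ≤ n`) and `1 − t_j t_j⁻¹` (`1 ≤ j ≤ n`).  The quotient algebra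
`ℬ = K⟨X,T,T⁻¹⟩/J` is `RingQuot (Brel K n)` and the quotient map `π` is
`RingQuot.mkAlgHom K (Brel K n)`. -/
inductive Brel (K : Type*) [Field K] (n : ℕ) :
    FreeAlgebra K (XTTn n) → FreeAlgebra K (XTTn n) → Prop
  | comm (i j : Fin n) :
      Brel K n (FreeAlgebra.ι K (Sum.inl i) * FreeAlgebra.ι K (Sum.inr (Sum.inl j)))
        (FreeAlgebra.ι K (Sum.inr (Sum.inl j)) * FreeAlgebra.ι K (Sum.inl i))
  | inv (j : Fin n) :
      Brel K n
        (FreeAlgebra.ι K (Sum.inr (Sum.inl j)) * FreeAlgebra.ι K (Sum.inr (Sum.inr j))) 1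

/-- The canonical embedding `ι : K⟨X⟩ → K⟨X,T,T⁻¹⟩`, `xᵢ ↦ xᵢ`. -/
noncomputable def embB (K : Type*) [Field K] (n : ℕ) :
    FreeAlgebra K (Fin n) →ₐ[K] FreeAlgebra K (XTTn n) :=
  FreeAlgebra.lift K fun i => FreeAlgebra.ι K (Sum.inl i)

/-- The algebra homomorphism `φ : K⟨X⟩ → K⟨X,T,T⁻¹⟩`, `xᵢ ↦ xᵢtᵢ`. -/
noncomputable def phiB (K : Type*) [Field K] (n : ℕ) :
    FreeAlgebra K (Fin n) →ₐ[K] FreeAlgebra K (XTTn n) :=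
  FreeAlgebra.lift K fun i =>
    FreeAlgebra.ι K (Sum.inl i) * FreeAlgebra.ι K (Sum.inr (Sum.inl i))

/-- The monomial of `K⟨X⟩` corresponding to a word `w ∈ ⟨X⟩`. -/
noncomputable def monoW (K : Type*) [Field K] {n : ℕ} (w : FreeMonoid (Fin n)) :
    FreeAlgebra K (Fin n) :=
  ((FreeMonoid.toList w).map (FreeAlgebra.ι K)).prod

/-! In `ℬ` every `tⱼ` commutes with the image of `K⟨X⟩`, so for a word `w` we get
`φ̄(w) = π(ι(w)) · t_w`, where `t_w` is the product of the `tᵢ` along `w`; it has the right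
inverse formed by the `tⱼ⁻¹` in reverse order, hence `π(ι(w)) ∈ φ̄(w) ℬ`, which gives the first
inclusion. For the second, the algebra map `ℬ → K⟨X⟩` sending `xᵢ ↦ xᵢ` and all `tⱼ, tⱼ⁻¹ ↦ 1`
is a left inverse of both `π ∘ ι` and `φ̄`, so it carries `I_ρ^{φ̄}` into `I_ρ`. -/

section RightIdealSpan

open MulOpposite

variable {A : Type*} [Semiring A]

theorem rightIdealSpan_eq_span (S : Set A) :
    rightIdealSpan S = (Submodule.span Aᵐᵒᵖ S : Set A) := by
  ext x
  rw [SetLike.mem_coe, Submodule.mem_span_set']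
  constructor
  · rintro ⟨d, f, q, hf, rfl⟩
    exact ⟨d, fun i => op (q i), fun i => ⟨f i, hf i⟩, by simp⟩
  · rintro ⟨d, r, g, rfl⟩
    exact ⟨d, fun i => g i, fun i => unop (r i), fun i => (g i).2, by
      simp [MulOpposite.smul_eq_mul_unop]⟩

theorem subset_rightIdealSpan (S : Set A) : S ⊆ rightIdealSpan S := by
  rw [rightIdealSpan_eq_span]
  exact Submodule.subset_span

theorem mul_mem_rightIdealSpan {S : Set A} {x : A} (hx : x ∈ rightIdealSpan S) (r : A) :
    x * r ∈ rightIdealSpan S := by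
  rw [rightIdealSpan_eq_span] at hx ⊢
  exact Submodule.smul_mem _ (op r) hx

theorem map_mem_rightIdealSpan {B G : Type*} [Semiring B] [FunLike G A B] [RingHomClass G A B]
    (ψ : G) {S : Set A} {T : Set B} (hS : ∀ s ∈ S, ψ s ∈ rightIdealSpan T) {x : A}
    (hx : x ∈ rightIdealSpan S) : ψ x ∈ rightIdealSpan T := by
  rw [rightIdealSpan_eq_span] at hS hx ⊢
  induction hx using Submodule.span_induction with
  | mem s hs => exact hS s hs
  | zero => simp
  | add x y _ _ hx hy => simpa using Submodule.add_mem _ hx hy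
  | smul r x _ hx =>
    simpa [MulOpposite.smul_eq_mul_unop] using Submodule.smul_mem _ (op (ψ (unop r))) hx

end RightIdealSpan

section QuotientAlgebra

variable (K : Type*) [Field K] (n : ℕ)

local notation "π" => RingQuot.mkAlgHom K (Brel K n)

noncomputable def tB (j : Fin n) : RingQuot (Brel K n) :=
  π (FreeAlgebra.ι K (Sum.inr (Sum.inl j)))

noncomputable def tInvB (j : Fin n) : RingQuot (Brel K n) :=
  π (FreeAlgebra.ι K (Sum.inr (Sum.inr j)))

theorem tB_mul_tInvB (j : Fin n) : tB K n j * tInvB K n j = 1 := by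
  simpa [tB, tInvB] using RingQuot.mkAlgHom_rel K (Brel.inv (K := K) (n := n) j)

theorem commute_tB_mk_embB (j : Fin n) (f : FreeAlgebra K (Fin n)) :
    Commute (tB K n j) (π (embB K n f)) := by
  induction f using FreeAlgebra.induction with
  | grade0 r => simpa using Algebra.commute_algebraMap_right r (tB K n j)
  | grade1 i =>
    simpa [embB, tB, Commute, SemiconjBy] using
      (RingQuot.mkAlgHom_rel K (Brel.comm (K := K) (n := n) i j)).symm
  | mul a b ha hb => simpa only [map_mul] using ha.mul_right hb
  | add a b ha hb => simpa only [map_add] using ha.add_right hb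

theorem mk_phiB_ι (i : Fin n) :
    π (phiB K n (FreeAlgebra.ι K i)) = π (embB K n (FreeAlgebra.ι K i)) * tB K n i := by
  simp [phiB, embB, tB]

theorem exists_mk_phiB_monoW_eq (w : FreeMonoid (Fin n)) :
    ∃ t u : RingQuot (Brel K n),
      π (phiB K n (monoW K w)) = π (embB K n (monoW K w)) * t ∧ t * u = 1 := by
  induction w using FreeMonoid.inductionOn' with
  | one => exact ⟨1, 1, by simp [monoW], one_mul 1⟩
  | of_mul i w ih =>
    obtain ⟨t, u, hφ, htu⟩ := ih
    refine ⟨tB K n i * t, u * tInvB K n i, ?_, ?_⟩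
    · have hw : monoW K (FreeMonoid.of i * w) = FreeAlgebra.ι K i * monoW K w := by
        simp [monoW]
      rw [hw, map_mul, map_mul, hφ, mk_phiB_ι, map_mul, map_mul, mul_assoc,
        ← mul_assoc (tB K n i), (commute_tB_mk_embB K n i _).eq, mul_assoc, mul_assoc]
    · rw [mul_assoc, ← mul_assoc t, htu, one_mul, tB_mul_tInvB]

theorem exists_mk_embB_monoW_eq_mul (w : FreeMonoid (Fin n)) :
    ∃ u, π (embB K n (monoW K w)) = π (phiB K n (monoW K w)) * u := by
  obtain ⟨t, u, hφ, htu⟩ := exists_mk_phiB_monoW_eq K n w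
  exact ⟨u, by rw [hφ, mul_assoc, htu, mul_one]⟩

noncomputable def eraseT : RingQuot (Brel K n) →ₐ[K] FreeAlgebra K (Fin n) :=
  RingQuot.liftAlgHom K ⟨FreeAlgebra.lift K (Sum.elim (FreeAlgebra.ι K) fun _ => 1), by
    rintro _ _ (_ | _) <;> simp⟩

theorem eraseT_mk_embB (f : FreeAlgebra K (Fin n)) : eraseT K n (π (embB K n f)) = f := by
  have : ((eraseT K n).comp π).comp (embB K n) = AlgHom.id K _ :=
    FreeAlgebra.hom_ext (by funext i; simp [eraseT, embB])
  exact AlgHom.congr_fun this f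

theorem eraseT_mk_phiB (f : FreeAlgebra K (Fin n)) : eraseT K n (π (phiB K n f)) = f := by
  have : ((eraseT K n).comp π).comp (phiB K n) = AlgHom.id K _ :=
    FreeAlgebra.hom_ext (by funext i; simp [eraseT, phiB])
  exact AlgHom.congr_fun this f

end QuotientAlgebra

/-- **The two inclusions `mon(I_ρ) ⊆ { f : π(ι(f)) ∈ I_ρ^{φ̄} } ⊆ I_ρ`.**
Here `I_ρ` is the right ideal of `K⟨X⟩` generated by `F`, `I_ρ^{φ̄}` is the right ideal of
`ℬ = K⟨X,T,T⁻¹⟩/J` generated by `{φ̄(f) : f ∈ F}`, and `mon(I_ρ)` is the right ideal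
generated by all monomials contained in `I_ρ`. -/
theorem monomialPart_subset_contraction_subset (K : Type*) [Field K] (n : ℕ)
    (F : Set (FreeAlgebra K (Fin n))) :
    rightIdealSpan {m | (∃ w : FreeMonoid (Fin n), m = monoW K w) ∧ m ∈ rightIdealSpan F} ⊆
        {f | RingQuot.mkAlgHom K (Brel K n) (embB K n f) ∈
          rightIdealSpan ((fun g => RingQuot.mkAlgHom K (Brel K n) (phiB K n g)) '' F)} ∧
      {f | RingQuot.mkAlgHom K (Brel K n) (embB K n f) ∈
          rightIdealSpan ((fun g => RingQuot.mkAlgHom K (Brel K n) (phiB K n g)) '' F)} ⊆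
        rightIdealSpan F := by
  have mk_phiB_mem : ∀ f ∈ rightIdealSpan F, RingQuot.mkAlgHom K (Brel K n) (phiB K n f) ∈
      rightIdealSpan ((fun g => RingQuot.mkAlgHom K (Brel K n) (phiB K n g)) '' F) :=
    fun _ => map_mem_rightIdealSpan ((RingQuot.mkAlgHom K (Brel K n)).comp (phiB K n))
      fun _ hg => subset_rightIdealSpan _ (Set.mem_image_of_mem _ hg)
  constructor
  · intro f hf
    refine map_mem_rightIdealSpan ((RingQuot.mkAlgHom K (Brel K n)).comp (embB K n)) ?_ hf
    rintro _ ⟨⟨w, rfl⟩, hw⟩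
    obtain ⟨u, hu⟩ := exists_mk_embB_monoW_eq_mul K n w
    rw [AlgHom.comp_apply, hu]
    exact mul_mem_rightIdealSpan (mk_phiB_mem _ hw) u
  · intro f hf
    rw [← eraseT_mk_embB K n f]
    refine map_mem_rightIdealSpan (eraseT K n) ?_ hf
    rintro _ ⟨g, hg, rfl⟩
    rw [eraseT_mk_phiB]
    exact subset_rightIdealSpan F hg
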